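/- With the level-hypervector construction of Algorithm 1 (thresholds τ_l = (m−l)/(m−1)), for any coordinate k and any 1 ≤ i < j ≤ m, the probability that L_i(k) = L_j(k) equals 1 − (j−i)/(2(m−1)). -/

import Mathlib

/-
Coordinates `k` of `L_i` and `L_j` can only differ when `Φ(k) ∈ [τ_j, τ_i)`, the window in
which `L_i` copies `L₁` while `L_j` copies `L_m`; there they differ exactly when
`L₁(k) ≠ L_m(k)`. So the disagreement event is a rectangle in `({0,1}^d)² × [0,1]^d`, of measure
`1/2 · (τ_i - τ_j) = (j - i) / (2 (m - 1))`.
-/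

open MeasureTheory

/-- Normalized Hamming distance on `{0,1}^d`. -/
noncomputable def hdelta (d : ℕ) (x y : Fin d → Bool) : ℝ :=
  (Finset.univ.filter fun k => x k ≠ y k).card / d

/-- Sample space: `(L₁, Lₘ)` together with the filter `Φ`. -/
abbrev Omega (d : ℕ) := ((Fin d → Bool) × (Fin d → Bool)) × (Fin d → ℝ)

/-- Uniform measure: `L₁, Lₘ` uniform on `{0,1}^d`, `Φ` uniform on `[0,1]^d`,
all independent. -/
noncomputable def levelMeasure (d : ℕ) : Measure (Omega d) :=
  ((PMF.uniformOfFintype (Fin d → Bool)).toMeasure.prod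
    (PMF.uniformOfFintype (Fin d → Bool)).toMeasure).prod
    (Measure.pi fun _ : Fin d => volume.restrict (Set.Icc (0 : ℝ) 1))

/-- The level-hypervector `L_l` of Algorithm 1:
`L_l(k) = L₁(k)` if `Φ(k) < (m-l)/(m-1)`, else `L_l(k) = Lₘ(k)`. -/
noncomputable def levelHV (d m : ℕ) (l : ℕ) (ω : Omega d) : Fin d → Bool :=
  fun k => if ω.2 k < ((m : ℝ) - l) / ((m : ℝ) - 1) then ω.1.1 k else ω.1.2 k

open ProbabilityTheory Set

instance isProbabilityMeasure_restrict_Icc_zero_one :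
    IsProbabilityMeasure (volume.restrict (Icc (0 : ℝ) 1)) :=
  ⟨by simp⟩

lemma PMF.toMeasure_uniformOfFintype_eq_uniformOn {α : Type*} [Fintype α] [Nonempty α]
    [MeasurableSpace α] [MeasurableSingletonClass α] :
    (PMF.uniformOfFintype α).toMeasure = uniformOn univ := by
  ext s hs
  classical
  rw [PMF.toMeasure_uniformOfFintype_apply s hs, uniformOn_univ,
    Measure.count_apply_finite _ s.toFinite]
  simp [toFinite_toFinset]

section BoolVectors

variable {ι : Type*} [Fintype ι] [DecidableEq ι]

lemma uniformOfFintype_toMeasure_apply_ne (k : ι) (c : Bool) :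
    (PMF.uniformOfFintype (ι → Bool)).toMeasure {b | b k ≠ c} = 2⁻¹ := by
  have hpi : (PMF.uniformOfFintype (ι → Bool)).toMeasure
      = Measure.pi fun _ : ι => uniformOn (univ : Set Bool) := by
    rw [PMF.toMeasure_uniformOfFintype_eq_uniformOn, ← uniformOn_pi, pi_univ]
  rw [hpi, show {b : ι → Bool | b k ≠ c} = Function.eval k ⁻¹' {x | x ≠ c} from rfl,
    (measurePreserving_eval _ k).measure_preimage (toFinite _).measurableSet.nullMeasurableSet,
    uniformOn_univ]
  cases c <;> simp

lemma uniformOfFintype_prod_apply_eval_ne (k : ι) :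
    ((PMF.uniformOfFintype (ι → Bool)).toMeasure.prod
      (PMF.uniformOfFintype (ι → Bool)).toMeasure)
      {p | p.1 k ≠ p.2 k} = 2⁻¹ := by
  rw [Measure.prod_apply (toFinite _).measurableSet]
  have hslice (a : ι → Bool) :
      Prod.mk a ⁻¹' {p : (ι → Bool) × (ι → Bool) | p.1 k ≠ p.2 k} = {b | b k ≠ a k} := by
    ext b
    exact ne_comm
  simp only [hslice, uniformOfFintype_toMeasure_apply_ne]
  simp

end BoolVectors

lemma ite_lt_ne_ite_lt_iff {α β : Type*} [LinearOrder α] {s t x : α} (hst : s ≤ t)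
    {a b : β} :
    (if x < t then a else b) ≠ (if x < s then a else b) ↔ a ≠ b ∧ x ∈ Ico s t := by
  by_cases hxs : x < s
  · simp [hxs, hxs.trans_le hst]
  · by_cases hxt : x < t <;> simp [hxs, hxt, not_lt.mp hxs]

lemma pi_restrict_Icc_zero_one_eval_preimage_Ico {ι : Type*} [Fintype ι] (k : ι) {a b : ℝ}
    (ha : 0 ≤ a) (hb : b ≤ 1) :
    Measure.pi (fun _ : ι => volume.restrict (Icc (0 : ℝ) 1)) (Function.eval k ⁻¹' Ico a b)
      = ENNReal.ofReal (b - a) := by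
  rw [(measurePreserving_eval _ k).measure_preimage measurableSet_Ico.nullMeasurableSet,
    Measure.restrict_apply measurableSet_Ico,
    inter_eq_left.mpr (Ico_subset_Icc_self.trans (Icc_subset_Icc ha hb)), Real.volume_Ico]

noncomputable def levelThreshold (m l : ℕ) : ℝ := ((m : ℝ) - l) / ((m : ℝ) - 1)

section LevelThreshold

variable {m : ℕ}

lemma levelThreshold_nonneg (hm : 1 < m) {j : ℕ} (hj : j ≤ m) : 0 ≤ levelThreshold m j := by
  have : (j : ℝ) ≤ m := by exact_mod_cast hj
  have : (1 : ℝ) < m := by exact_mod_cast hm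
  exact div_nonneg (by linarith) (by linarith)

lemma levelThreshold_le_one (hm : 1 < m) {i : ℕ} (hi : 1 ≤ i) : levelThreshold m i ≤ 1 := by
  have : (1 : ℝ) ≤ i := by exact_mod_cast hi
  have : (1 : ℝ) < m := by exact_mod_cast hm
  rw [levelThreshold, div_le_one (by linarith)]
  linarith

lemma levelThreshold_antitone (hm : 1 < m) : Antitone (levelThreshold m) := by
  intro i j hij
  have : (i : ℝ) ≤ j := by exact_mod_cast hij
  have : (1 : ℝ) < m := by exact_mod_cast hm
  exact div_le_div_of_nonneg_right (by linarith) (by linarith)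

lemma levelThreshold_sub_levelThreshold (i j : ℕ) :
    levelThreshold m i - levelThreshold m j = ((j : ℝ) - i) / ((m : ℝ) - 1) := by
  rw [levelThreshold, levelThreshold, ← sub_div]
  ring

end LevelThreshold

instance isProbabilityMeasure_levelMeasure (d : ℕ) : IsProbabilityMeasure (levelMeasure d) := by
  unfold levelMeasure
  infer_instance

section LevelHV

variable {d m i j : ℕ}

lemma setOf_levelHV_ne (hm : 1 < m) (hij : i ≤ j) (k : Fin d) :
    {ω : Omega d | levelHV d m i ω k ≠ levelHV d m j ω k}
      = {p | p.1 k ≠ p.2 k} ×ˢ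
          (Function.eval k ⁻¹' Ico (levelThreshold m j) (levelThreshold m i)) := by
  ext ω
  exact ite_lt_ne_ite_lt_iff (levelThreshold_antitone hm hij)

lemma measurableSet_setOf_levelHV_ne (hm : 1 < m) (hij : i ≤ j) (k : Fin d) :
    MeasurableSet {ω : Omega d | levelHV d m i ω k ≠ levelHV d m j ω k} := by
  rw [setOf_levelHV_ne hm hij k]
  exact (toFinite _).measurableSet.prod (measurableSet_Ico.preimage (measurable_pi_apply k))

lemma levelMeasure_setOf_levelHV_ne (hm : 1 < m) (hi : 1 ≤ i) (hij : i ≤ j) (hj : j ≤ m)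
    (k : Fin d) :
    levelMeasure d {ω | levelHV d m i ω k ≠ levelHV d m j ω k}
      = 2⁻¹ * ENNReal.ofReal (((j : ℝ) - i) / ((m : ℝ) - 1)) := by
  rw [setOf_levelHV_ne hm hij, levelMeasure, Measure.prod_prod,
    uniformOfFintype_prod_apply_eval_ne, pi_restrict_Icc_zero_one_eval_preimage_Ico k
      (levelThreshold_nonneg hm hj) (levelThreshold_le_one hm hi),
    levelThreshold_sub_levelThreshold]

lemma levelMeasure_setOf_levelHV_eq (hm : 1 < m) (hi : 1 ≤ i) (hij : i ≤ j) (hj : j ≤ m)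
    (k : Fin d) :
    levelMeasure d {ω | levelHV d m i ω k = levelHV d m j ω k}
      = 1 - 2⁻¹ * ENNReal.ofReal (((j : ℝ) - i) / ((m : ℝ) - 1)) := by
  rw [← levelMeasure_setOf_levelHV_ne hm hi hij hj,
    ← prob_compl_eq_one_sub (measurableSet_setOf_levelHV_ne hm hij k)]
  congr 1
  ext ω
  simp

end LevelHV

theorem prob_coordinates_agree_general (d m : ℕ)
    (i j : ℕ) (hi : 1 ≤ i) (hij : i < j) (hj : j ≤ m) (k : Fin d) :
    levelMeasure d {ω | levelHV d m i ω k = levelHV d m j ω k}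
      = ENNReal.ofReal (1 - ((j : ℝ) - i) / (2 * ((m : ℝ) - 1))) := by
  have hm : 1 < m := by omega
  have hm' : (1 : ℝ) < m := by exact_mod_cast hm
  have hji : (i : ℝ) < j := by exact_mod_cast hij
  rw [levelMeasure_setOf_levelHV_eq hm hi hij.le hj, ← ENNReal.ofReal_ofNat 2,
    ← ENNReal.ofReal_inv_of_pos two_pos, ← ENNReal.ofReal_mul (by norm_num),
    ← ENNReal.ofReal_one,
    ← ENNReal.ofReal_sub _ (by positivity)]
  congr 1
  field_simp

theorem prob_coordinates_agree (d m : ℕ) (hd : 1 ≤ d) (hm : 2 ≤ m)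
    (i j : ℕ) (hi : 1 ≤ i) (hij : i < j) (hj : j ≤ m) (k : Fin d) :
    levelMeasure d {ω | levelHV d m i ω k = levelHV d m j ω k}
      = ENNReal.ofReal (1 - ((j : ℝ) - i) / (2 * ((m : ℝ) - 1))) :=
  prob_coordinates_agree_general d m i j hi hij hj k
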